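/- Main cutoff theorem: Let ψ = ⋀_J φ(J) be an indexed ACTL*K_{-X} sentence with |J| index variables. Then T(n) ⊨ ψ for all n ≥ |J| if and only if T(|J|) ⊨ ψ. In particular, |J| is a cutoff for ψ. -/
import Mathlib


-- State and path formulas of ACTL*K without next, in negation normal form,
-- with atoms and epistemic modalities indexed by agents in `A`.
mutual
inductive SForm (AP A : Type) : Type where
  | atom : AP → A → SForm AP A
  | natom : AP → A → SForm AP A
  | sand : SForm AP A → SForm AP A → SForm AP A
  | sor : SForm AP A → SForm AP A → SForm AP A
  | know : A → SForm AP A → SForm AP A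
  | aall : PForm AP A → SForm AP A

inductive PForm (AP A : Type) : Type where
  | ofState : SForm AP A → PForm AP A
  | pand : PForm AP A → PForm AP A → PForm AP A
  | por : PForm AP A → PForm AP A → PForm AP A
  | puntil : PForm AP A → PForm AP A → PForm AP A
  | prelease : PForm AP A → PForm AP A → PForm AP A
end

-- Renaming of agent indices in a formula.
mutual
def renameS {AP A B : Type} (f : A → B) : SForm AP A → SForm AP B
  | .atom p i => .atom p (f i)
  | .natom p i => .natom p (f i)
  | .sand φ ψ => .sand (renameS f φ) (renameS f ψ)
  | .sor φ ψ => .sor (renameS f φ) (renameS f ψ)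
  | .know i φ => .know (f i) (renameS f φ)
  | .aall φ => .aall (renameP f φ)

def renameP {AP A B : Type} (f : A → B) : PForm AP A → PForm AP B
  | .ofState φ => .ofState (renameS f φ)
  | .pand φ ψ => .pand (renameP f φ) (renameP f ψ)
  | .por φ ψ => .por (renameP f φ) (renameP f ψ)
  | .puntil φ ψ => .puntil (renameP f φ) (renameP f ψ)
  | .prelease φ ψ => .prelease (renameP f φ) (renameP f ψ)
end

/-- A model: global states, a transition relation, an initial state,
epistemic indistinguishability relations, and an indexed valuation. -/
structure Model (AP A : Type) where
  G : Type
  R : G → G → Prop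
  init : G
  eqv : A → G → G → Prop
  val : G → AP → A → Prop

def Model.ValidPath {AP A : Type} (M : Model AP A) (π : ℕ → M.G) : Prop :=
  ∀ j, M.R (π j) (π (j + 1))

def shiftPath {G : Type} (π : ℕ → G) (i : ℕ) : ℕ → G := fun j => π (i + j)

-- Satisfaction of state formulas at states and of path formulas on paths.
mutual
def ssat {AP A : Type} (M : Model AP A) : SForm AP A → M.G → Prop
  | .atom p i, g => M.val g p i
  | .natom p i, g => ¬ M.val g p i
  | .sand φ ψ, g => ssat M φ g ∧ ssat M ψ g
  | .sor φ ψ, g => ssat M φ g ∨ ssat M ψ g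
  | .know i φ, g => ∀ g', M.eqv i g g' → ssat M φ g'
  | .aall φ, g => ∀ π, M.ValidPath π → π 0 = g → psat M φ π

def psat {AP A : Type} (M : Model AP A) : PForm AP A → (ℕ → M.G) → Prop
  | .ofState φ, π => ssat M φ (π 0)
  | .pand φ ψ, π => psat M φ π ∧ psat M ψ π
  | .por φ ψ, π => psat M φ π ∨ psat M ψ π
  | .puntil φ ψ, π => ∃ i, psat M ψ (shiftPath π i) ∧ ∀ j < i, psat M φ (shiftPath π j)
  | .prelease φ ψ, π => ∀ i, (∀ j < i, ¬ psat M φ (shiftPath π j)) → psat M ψ (shiftPath π i)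
end

/-- A template agent: template states, initial state, synchronous and
asynchronous template actions (the silent action is treated separately),
protocol, deterministic evolution function, and labeling. -/
structure Template (AP : Type) where
  L : Type
  init : L
  SAct : Type
  AAct : Type
  protS : L → SAct → Prop
  protA : L → AAct → Prop
  tS : L → SAct → L
  tA : L → AAct → L
  lab : L → AP → Prop

/-- Global states of the instance `T(n)`: a template state per agent. -/
def GState {AP : Type} (T : Template AP) (n : ℕ) : Type := Fin n → T.L

/-- Concrete actions of `T(n)`: synchronous actions (shared by all agents),
asynchronous actions indexed by the unique agent performing them, and the
(joint) silent action. -/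
inductive CAct {AP : Type} (T : Template AP) (n : ℕ) : Type where
  | sync : T.SAct → CAct T n
  | async : T.AAct → Fin n → CAct T n
  | eps : CAct T n

/-- The global interleaved transition relation of `T(n)`: a synchronous
action is performed by all agents simultaneously, an asynchronous action by
exactly one agent (all others keep their state), and the silent action
leaves the global state unchanged. -/
def GTrans {AP : Type} (T : Template AP) (n : ℕ) :
    CAct T n → GState T n → GState T n → Prop
  | .sync s, g, g' => ∀ i, T.protS (g i) s ∧ g' i = T.tS (g i) s
  | .async b i, g, g' =>
      T.protA (g i) b ∧ g' i = T.tA (g i) b ∧ ∀ j, j ≠ i → g' j = g j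
  | .eps, g, g' => g' = g

/-- The initial global state of `T(n)`. -/
def GInit {AP : Type} (T : Template AP) (n : ℕ) : GState T n := fun _ => T.init

/-- Reachability from the initial state of `T(n)`. -/
def GReach {AP : Type} (T : Template AP) (n : ℕ) (g : GState T n) : Prop :=
  Relation.ReflTransGen (fun x y => ∃ a, GTrans T n a x y) (GInit T n) g

/-- The instance `T(n)` as a model: epistemic relations are given by equality
of the local component over the (reachable) global states, and atoms `p_i`
hold according to the template labeling of agent `i`'s local state. -/
def PIISModel {AP : Type} (T : Template AP) (n : ℕ) : Model AP (Fin n) where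
  G := GState T n
  R := fun g g' => ∃ a, GTrans T n a g g'
  init := GInit T n
  eqv := fun i g g' => GReach T n g' ∧ g i = g' i
  val := fun g p i => T.lab (g i) p

/-- `T(n) ⊨ φ`: satisfaction at the initial state. -/
def PIISsat {AP : Type} (T : Template AP) (n : ℕ) (φ : SForm AP (Fin n)) : Prop :=
  ssat (PIISModel T n) φ (PIISModel T n).init

mutual
theorem renameS_id {AP A : Type} : ∀ φ : SForm AP A, renameS id φ = φ
  | .atom p i => rfl
  | .natom p i => rfl
  | .sand φ ψ => by simp [renameS, renameS_id φ, renameS_id ψ]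
  | .sor φ ψ => by simp [renameS, renameS_id φ, renameS_id ψ]
  | .know i φ => by simp [renameS, renameS_id φ]
  | .aall φ => by simp [renameS, renameP_id φ]

theorem renameP_id {AP A : Type} : ∀ φ : PForm AP A, renameP id φ = φ
  | .ofState φ => by simp [renameP, renameS_id φ]
  | .pand φ ψ => by simp [renameP, renameP_id φ, renameP_id ψ]
  | .por φ ψ => by simp [renameP, renameP_id φ, renameP_id ψ]
  | .puntil φ ψ => by simp [renameP, renameP_id φ, renameP_id ψ]
  | .prelease φ ψ => by simp [renameP, renameP_id φ, renameP_id ψ]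
end

theorem trans_proj {AP : Type} {T : Template AP} {k n : ℕ} {C : Fin k → Fin n}
    (hC : Function.Injective C) {a : CAct T n} {g g' : GState T n}
    (h : GTrans T n a g g') :
    ∃ a', GTrans T k a' (fun j => g (C j)) (fun j => g' (C j)) := by
  cases a with
  | sync s =>
    exact ⟨.sync s, fun i => h (C i)⟩
  | async b i =>
    obtain ⟨h1, h2, h3⟩ := h
    by_cases hi : ∃ j, C j = i
    · obtain ⟨j, rfl⟩ := hi
      refine ⟨.async b j, h1, h2, fun j' hj' => h3 _ ?_⟩
      exact fun e => hj' (hC e)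
    · refine ⟨.eps, funext fun j => h3 (C j) ?_⟩
      exact fun e => hi ⟨j, e⟩
  | eps =>
    exact ⟨.eps, by cases h; rfl⟩

theorem reach_proj {AP : Type} {T : Template AP} {k n : ℕ} {C : Fin k → Fin n}
    (hC : Function.Injective C) {g : GState T n} (h : GReach T n g) :
    GReach T k (fun j => g (C j)) := by
  induction h with
  | refl => exact Relation.ReflTransGen.refl
  | tail _ hstep ih =>
    obtain ⟨a, hstep⟩ := hstep
    exact ih.tail (trans_proj hC hstep)

mutual
theorem transS {AP : Type} {T : Template AP} {k n : ℕ} {C : Fin k → Fin n}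
    (hC : Function.Injective C) :
    ∀ (φ : SForm AP (Fin k)) (g : GState T n),
      ssat (PIISModel T k) φ (fun j => g (C j)) →
        ssat (PIISModel T n) (renameS C φ) g
  | .atom p i, g, h => h
  | .natom p i, g, h => h
  | .sand φ ψ, g, h => ⟨transS hC φ g h.1, transS hC ψ g h.2⟩
  | .sor φ ψ, g, h =>
      h.elim (fun h => Or.inl (transS hC φ g h)) (fun h => Or.inr (transS hC ψ g h))
  | .know i φ, g, h => fun g' hg' =>
      transS hC φ g' (h _ ⟨reach_proj hC hg'.1, hg'.2⟩)
  | .aall φ, g, h => fun π hπ h0 =>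
      transP hC φ π (h (fun t j => π t (C j))
        (fun t => trans_proj hC (hπ t).choose_spec |>.imp fun _ h => h)
        (by subst h0; rfl))

theorem transP {AP : Type} {T : Template AP} {k n : ℕ} {C : Fin k → Fin n}
    (hC : Function.Injective C) :
    ∀ (φ : PForm AP (Fin k)) (π : ℕ → GState T n),
      psat (PIISModel T k) φ (fun t j => π t (C j)) →
        psat (PIISModel T n) (renameP C φ) π
  | .ofState φ, π, h => transS hC φ (π 0) h
  | .pand φ ψ, π, h => ⟨transP hC φ π h.1, transP hC ψ π h.2⟩
  | .por φ ψ, π, h =>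
      h.elim (fun h => Or.inl (transP hC φ π h)) (fun h => Or.inr (transP hC ψ π h))
  | .puntil φ ψ, π, h => by
      obtain ⟨i, h1, h2⟩ := h
      exact ⟨i, transP hC ψ _ h1, fun j hj => transP hC φ _ (h2 j hj)⟩
  | .prelease φ ψ, π, h => fun i hi => by
      refine transP hC ψ _ (h i fun j hj hc => hi j hj ?_)
      exact transP hC φ _ hc
end

/-- Main cutoff theorem: let `ψ = ⋀_J φ(J)` be an indexed sentence with
`k = |J|` index variables, interpreted in `T(n)` as the conjunction of the
instantiations `φ(C)` over all tuples `C` of `k` distinct agents of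
`{1,…,n}`. Then `T(n) ⊨ ψ` for all `n ≥ k` iff `T(k) ⊨ ψ`; in particular,
`k = |J|` is a cutoff for `ψ`. -/
theorem main_cutoff_theorem {AP : Type} (T : Template AP) (k : ℕ)
    (φ : SForm AP (Fin k)) :
    (∀ n, k ≤ n → ∀ C : Fin k ↪ Fin n, PIISsat T n (renameS (⇑C) φ)) ↔
      (∀ C : Fin k ↪ Fin k, PIISsat T k (renameS (⇑C) φ)) := by
  constructor
  · intro h C
    exact h k le_rfl C
  · intro h n hn C
    have hk : PIISsat T k φ := by
      have := h (Function.Embedding.refl _)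
      rwa [show (⇑(Function.Embedding.refl (Fin k))) = id from rfl, renameS_id] at this
    exact transS C.injective φ (GInit T n) hk
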